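/- arXiv:2603.01183 — 3 statements merged into one kernel-verified Lean document; each statement's English description precedes it below -/
import Mathlib

section
/- Let X and Y be Banach spaces and A : X → Y a bounded linear operator that is strictly singular (its restriction to any closed infinite-dimensional subspace of X is never an isomorphism onto its image). If the null space N(A) is complemented in X by a closed subspace U and the range of A contains an infinite-dimensional closed subspace of Y, then a contradiction follows; i.e., a strictly singular operator whose range contains an infinite-dimensional closed subspace has uncomplemented kernel. -/
theorem stmt_1
    (X Y : Type*) [NormedAddCommGroup X] [NormedSpace ℝ X] [CompleteSpace X]
    [NormedAddCommGroup Y] [NormedSpace ℝ Y] [CompleteSpace Y]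
    (A : X →L[ℝ] Y)
    (hss : ∀ Z : Submodule ℝ X, IsClosed (Z : Set X) → ¬ FiniteDimensional ℝ Z →
      ¬ ∃ c : ℝ, 0 < c ∧ ∀ z ∈ Z, c * ‖z‖ ≤ ‖A z‖)
    (U : Submodule ℝ X) (hUclosed : IsClosed (U : Set X))
    (hcompl : IsCompl (LinearMap.ker (A : X →ₗ[ℝ] Y)) U)
    (M : Submodule ℝ Y) (hMclosed : IsClosed (M : Set Y))
    (hMinf : ¬ FiniteDimensional ℝ M)
    (hMrange : (M : Set Y) ⊆ Set.range A) :
    False := by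
  set W : Submodule ℝ X := U ⊓ Submodule.comap (A : X →ₗ[ℝ] Y) M with hW
  have hWclosed : IsClosed (W : Set X) := by
    have : (W : Set X) = (U : Set X) ∩ (A ⁻¹' (M : Set Y)) := rfl
    rw [this]
    exact hUclosed.inter (hMclosed.preimage A.continuous)
  haveI : CompleteSpace W := hWclosed.completeSpace_coe
  haveI : CompleteSpace M := hMclosed.completeSpace_coe
  have hmem : ∀ w : W, A (w : X) ∈ M := fun w => w.2.2
  let B : W →L[ℝ] M := (A.comp W.subtypeL).codRestrict M hmem
  have hBapp : ∀ w : W, ((B w : Y)) = A (w : X) := fun w => rfl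
  have hBinj : LinearMap.ker (B : W →ₗ[ℝ] M) = ⊥ := by
    rw [LinearMap.ker_eq_bot']
    intro w hw
    have hAw : A (w : X) = 0 := by
      have := congrArg (Subtype.val) hw
      simpa [hBapp] using this
    have : (w : X) = 0 :=
      (Submodule.disjoint_def.mp hcompl.disjoint) _ (LinearMap.mem_ker.mpr hAw) w.2.1
    exact Subtype.ext this
  have hBsurj : LinearMap.range (B : W →ₗ[ℝ] M) = ⊤ := by
    rw [LinearMap.range_eq_top]
    intro y
    obtain ⟨x, hx⟩ := hMrange y.2
    have hxtop : x ∈ (LinearMap.ker (A : X →ₗ[ℝ] Y)) ⊔ U := by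
      rw [hcompl.sup_eq_top]; trivial
    obtain ⟨k, hk, u, hu, hku⟩ := Submodule.mem_sup.mp hxtop
    have hAu : A u = (y : Y) := by
      have hAk : A k = 0 := hk
      calc A u = A (k + u) := by rw [map_add, hAk, zero_add]
        _ = (y : Y) := by rw [hku, hx]
    have huW : u ∈ W := ⟨hu, by simp [Submodule.mem_comap, hAu]⟩
    exact ⟨⟨u, huW⟩, Subtype.ext (by simpa [hBapp] using hAu)⟩
  have hWinf : ¬ FiniteDimensional ℝ W := by
    intro hfd
    exact hMinf (Module.Finite.of_surjective B.toLinearMap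
      (LinearMap.range_eq_top.mp hBsurj))
  let e : W ≃L[ℝ] M := ContinuousLinearEquiv.ofBijective B hBinj hBsurj
  set C : ℝ := max ‖(e.symm : M →L[ℝ] W)‖ 1 with hC
  have hC1 : 1 ≤ C := le_max_right _ _
  refine hss W hWclosed hWinf ⟨C⁻¹, by positivity, ?_⟩
  intro z hz
  set w : W := ⟨z, hz⟩ with hwdef
  have h1 : ‖w‖ ≤ ‖(e.symm : M →L[ℝ] W)‖ * ‖e w‖ := by
    have := (e.symm : M →L[ℝ] W).le_opNorm (e w)
    simpa using this
  have h2 : (e w : Y) = A z := by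
    have : e w = B w := rfl
    rw [this]; exact hBapp w
  have h3 : ‖w‖ ≤ C * ‖A z‖ := by
    have hen : ‖e w‖ = ‖A z‖ := by
      rw [show ‖e w‖ = ‖(e w : Y)‖ from rfl, h2]
    calc ‖w‖ ≤ ‖(e.symm : M →L[ℝ] W)‖ * ‖e w‖ := h1
      _ ≤ C * ‖A z‖ := by
          rw [hen]
          exact mul_le_mul_of_nonneg_right (le_max_left _ _) (norm_nonneg _)
  have hzw : ‖z‖ = ‖w‖ := rfl
  rw [hzw]
  calc C⁻¹ * ‖w‖ ≤ C⁻¹ * (C * ‖A z‖) := by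
        apply mul_le_mul_of_nonneg_left h3 (by positivity)
    _ = ‖A z‖ := by field_simp
end

section
/- Let X and Y be Banach spaces, A : X → Y bounded linear, X = N(A) ⊕ U an algebraic direct sum. The pseudo-inverse A_U† : R(A) → U is bounded if and only if both R(A) is closed in Y and U is closed in X. -/
/-- The pseudo-inverse `A_U† : R(A) → U` (sending `Au` to `u ∈ U`) is bounded
iff `R(A)` is closed in `Y` and `U` is closed in `X`. Boundedness is expressed
by the equivalent estimate `‖u‖ ≤ C ‖A u‖` for all `u ∈ U`. -/
theorem stmt_9
    (X Y : Type*) [NormedAddCommGroup X] [NormedSpace ℝ X] [CompleteSpace X]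
    [NormedAddCommGroup Y] [NormedSpace ℝ Y] [CompleteSpace Y]
    (A : X →L[ℝ] Y) (U : Submodule ℝ X)
    (hcompl : IsCompl (LinearMap.ker (A : X →ₗ[ℝ] Y)) U) :
    (∃ C : ℝ, ∀ u ∈ U, ‖u‖ ≤ C * ‖A u‖) ↔
      (IsClosed (Set.range A) ∧ IsClosed (U : Set X)) := by
  constructor
  · rintro ⟨C, hC⟩
    set C' := max C 0 with hC'def
    have hC'0 : 0 ≤ C' := le_max_right _ _
    have hC' : ∀ u ∈ U, ‖u‖ ≤ C' * ‖A u‖ := fun u hu =>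
      (hC u hu).trans (mul_le_mul_of_nonneg_right (le_max_left _ _) (norm_nonneg _))
    -- projection onto U along ker A
    set P : X →ₗ[ℝ] U := U.linearProjOfIsCompl (LinearMap.ker (A : X →ₗ[ℝ] Y)) hcompl.symm with hPdef
    have hPker : ∀ x : X, x - (P x : X) ∈ LinearMap.ker (A : X →ₗ[ℝ] Y) := by
      intro x
      have h1 : P ((P x : X)) = P x := Submodule.linearProjOfIsCompl_apply_left hcompl.symm (P x)
      have : P (x - (P x : X)) = 0 := by simp [map_sub, h1]
      have := (Submodule.linearProjOfIsCompl_apply_eq_zero_iff hcompl.symm).mp this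
      exact this
    have hAP : ∀ x : X, A ((P x : X)) = A x := by
      intro x
      have := hPker x
      rw [LinearMap.mem_ker] at this
      have : A x - A ((P x : X)) = 0 := by
        rw [← map_sub]; exact this
      exact (sub_eq_zero.mp this).symm
    -- bound for P
    have hPbound : ∀ x : X, ‖(P x : X)‖ ≤ (C' * ‖A‖) * ‖x‖ := by
      intro x
      calc ‖(P x : X)‖ ≤ C' * ‖A ((P x : X))‖ := hC' _ (P x).2
        _ = C' * ‖A x‖ := by rw [hAP]
        _ ≤ C' * (‖A‖ * ‖x‖) := mul_le_mul_of_nonneg_left (A.le_opNorm x) hC'0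
        _ = (C' * ‖A‖) * ‖x‖ := by ring
    have hQ : Continuous fun x : X => ((P x : X)) := by
      have : Continuous (P : X → U) :=
        (LinearMap.mkContinuous P (C' * ‖A‖) (fun x => hPbound x)).continuous
      exact continuous_subtype_val.comp this
    have hUclosed : IsClosed (U : Set X) := by
      have : (U : Set X) = {x : X | (P x : X) = x} := by
        ext x
        constructor
        · intro hx
          have := Submodule.linearProjOfIsCompl_apply_left hcompl.symm ⟨x, hx⟩
          exact congrArg (fun u : U => (u : X)) this
        · intro hx
          rw [← hx]; exact (P x).2
      rw [this]
      exact isClosed_eq hQ continuous_id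
    refine ⟨?_, hUclosed⟩
    -- range closed
    haveI : CompleteSpace U := hUclosed.completeSpace_coe
    set T : U →L[ℝ] Y := A.comp U.subtypeL with hT
    have hTanti : AntilipschitzWith C'.toNNReal T :=
      T.antilipschitz_of_bound (fun u => by
        have := hC' u u.2
        simpa [hT, Real.coe_toNNReal _ hC'0] using this)
    have hcl : IsClosed (Set.range T) := hTanti.isClosed_range T.uniformContinuous
    have hrange : Set.range ⇑A = Set.range ⇑T := by
      ext y
      constructor
      · rintro ⟨x, rfl⟩
        exact ⟨P x, by simp [hT, hAP x]⟩
      · rintro ⟨u, rfl⟩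
        exact ⟨u, rfl⟩
    rw [hrange]; exact hcl
  · rintro ⟨hRcl, hUcl⟩
    haveI : CompleteSpace U := hUcl.completeSpace_coe
    have hRcl' : IsClosed ((LinearMap.range (A : X →ₗ[ℝ] Y) : Submodule ℝ Y) : Set Y) := by
      rw [LinearMap.coe_range]; exact hRcl
    haveI : CompleteSpace (LinearMap.range (A : X →ₗ[ℝ] Y)) := hRcl'.completeSpace_coe
    set T : U →L[ℝ] (LinearMap.range (A : X →ₗ[ℝ] Y)) :=
      (A.comp U.subtypeL).codRestrict (LinearMap.range (A : X →ₗ[ℝ] Y))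
        (fun u => LinearMap.mem_range_self _ _) with hT
    have hker : LinearMap.ker (T : U →ₗ[ℝ] (LinearMap.range (A : X →ₗ[ℝ] Y))) = ⊥ := by
      rw [LinearMap.ker_eq_bot']
      intro u hu
      have hAu : A (u : X) = 0 := congrArg Subtype.val hu
      have : (u : X) ∈ LinearMap.ker (A : X →ₗ[ℝ] Y) ⊓ U := ⟨hAu, u.2⟩
      rw [hcompl.inf_eq_bot] at this
      exact Subtype.ext this
    have hrange : LinearMap.range (T : U →ₗ[ℝ] (LinearMap.range (A : X →ₗ[ℝ] Y))) = ⊤ := by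
      rw [LinearMap.range_eq_top]
      rintro ⟨y, x, rfl⟩
      -- decompose x
      have hx : x ∈ LinearMap.ker (A : X →ₗ[ℝ] Y) ⊔ U := by
        rw [hcompl.sup_eq_top]; trivial
      obtain ⟨k, hk, u, hu, rfl⟩ := Submodule.mem_sup.mp hx
      refine ⟨⟨u, hu⟩, ?_⟩
      apply Subtype.ext
      show A u = A (k + u)
      rw [LinearMap.mem_ker] at hk
      simp [map_add, hk]
      exact hk
    let E := ContinuousLinearEquiv.ofBijective T hker hrange
    refine ⟨‖(E.symm : (LinearMap.range (A : X →ₗ[ℝ] Y)) →L[ℝ] U)‖, ?_⟩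
    intro u hu
    have h1 : (E.symm : (LinearMap.range (A : X →ₗ[ℝ] Y)) →L[ℝ] U) (E ⟨u, hu⟩) = ⟨u, hu⟩ := E.symm_apply_apply _
    have h2 := (E.symm : (LinearMap.range (A : X →ₗ[ℝ] Y)) →L[ℝ] U).le_opNorm (E ⟨u, hu⟩)
    rw [h1] at h2
    have h3 : ‖E (⟨u, hu⟩ : U)‖ = ‖A u‖ := rfl
    calc ‖u‖ = ‖(⟨u, hu⟩ : U)‖ := rfl
      _ ≤ ‖(E.symm : (LinearMap.range (A : X →ₗ[ℝ] Y)) →L[ℝ] U)‖ * ‖E (⟨u, hu⟩ : U)‖ := h2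
      _ = _ := by rw [h3]
end

section
/- Let H be a separable Hilbert space with orthonormal basis (e⁽ˡ⁾)ₗ and let (ζ⁽ˡ⁾)ₗ be a sequence in H such that Σₗ ‖e⁽ˡ⁾ − ζ⁽ˡ⁾‖² < 1. Then there exists a continuous linear isomorphism T : H → H with T e⁽ˡ⁾ = ζ⁽ˡ⁾ for all l. -/
/-- Paley–Wiener stability criterion: if `(ζ l)` is quadratically close to an
orthonormal basis `(e l)` of a separable Hilbert space, with
`∑ ‖e l − ζ l‖² < 1`, then there is a continuous linear isomorphism `T`
of `H` with `T (e l) = ζ l` for all `l`. -/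
theorem stmt_10
    (H : Type*) [NormedAddCommGroup H] [InnerProductSpace ℝ H] [CompleteSpace H]
    (e : HilbertBasis ℕ ℝ H) (ζ : ℕ → H)
    (hsum : Summable (fun l => ‖e l - ζ l‖ ^ 2))
    (hlt : (∑' l, ‖e l - ζ l‖ ^ 2) < 1) :
    ∃ T : H ≃L[ℝ] H, ∀ l, T (e l) = ζ l := by
  classical
  set d : ℕ → H := fun l => e l - ζ l with hd
  set s : ℝ := ∑' l, ‖d l‖ ^ 2 with hs
  have hs0 : 0 ≤ s := tsum_nonneg (fun l => sq_nonneg _)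
  -- coefficients are square-summable with sum ‖x‖²
  have hc2 : ∀ x : H, Summable (fun l => ‖(inner ℝ (e l) x : ℝ)‖ ^ 2) := by
    intro x
    have h := (lp.memℓp (e.repr x)).summable (p := 2) (by norm_num)
    have : (fun l => ‖e.repr x l‖ ^ (2 : ENNReal).toReal) =
        fun l => ‖(inner ℝ (e l) x : ℝ)‖ ^ 2 := by
      funext l
      rw [e.repr_apply_apply]
      norm_num
    rwa [this] at h
  have hc2sum : ∀ x : H, (∑' l, ‖(inner ℝ (e l) x : ℝ)‖ ^ 2) = ‖x‖ ^ 2 := by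
    intro x
    have h := lp.norm_rpow_eq_tsum (p := 2) (by norm_num) (e.repr x)
    have h2 : ‖e.repr x‖ = ‖x‖ := e.repr.norm_map x
    have h3 : (fun l => ‖e.repr x l‖ ^ (2 : ENNReal).toReal) =
        fun l => ‖(inner ℝ (e l) x : ℝ)‖ ^ 2 := by
      funext l
      rw [e.repr_apply_apply]
      norm_num
    rw [h2, h3] at h
    rw [← h]
    norm_num
  -- summability of the series defining D
  have hsx : ∀ x : H, Summable (fun l => ‖(inner ℝ (e l) x : ℝ) • d l‖) := by
    intro x
    refine Summable.of_nonneg_of_le (fun l => norm_nonneg _) (fun l => ?_)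
      (((hc2 x).add hsum).mul_left (1/2 : ℝ))
    rw [norm_smul]
    have h1 : 0 ≤ ‖(inner ℝ (e l) x : ℝ)‖ := norm_nonneg _
    have h2 : 0 ≤ ‖d l‖ := norm_nonneg _
    nlinarith [sq_nonneg (‖(inner ℝ (e l) x : ℝ)‖ - ‖d l‖)]
  have hS : ∀ x : H, Summable (fun l => (inner ℝ (e l) x : ℝ) • d l) :=
    fun x => (hsx x).of_norm
  -- the linear map
  let Dlin : H →ₗ[ℝ] H :=
    { toFun := fun x => ∑' l, (inner ℝ (e l) x : ℝ) • d l
      map_add' := by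
        intro x y
        simp_rw [inner_add_right, add_smul]
        exact Summable.tsum_add (hS x) (hS y)
      map_smul' := by
        intro c x
        simp only [RingHom.id_apply]
        simp_rw [real_inner_smul_right, mul_smul]
        exact Summable.tsum_const_smul c (hS x) }
  -- the norm bound via Cauchy–Schwarz
  have hbound : ∀ x : H, ‖Dlin x‖ ≤ Real.sqrt s * ‖x‖ := by
    intro x
    have h1 : ‖Dlin x‖ ≤ ∑' l, ‖(inner ℝ (e l) x : ℝ) • d l‖ :=
      norm_tsum_le_tsum_norm (hsx x)
    have h2 : (∑' l, ‖(inner ℝ (e l) x : ℝ) • d l‖) ≤ Real.sqrt (‖x‖ ^ 2 * s) := by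
      refine Summable.tsum_le_of_sum_le (hsx x) (fun t => ?_)
      have hcs : (∑ l ∈ t, ‖(inner ℝ (e l) x : ℝ)‖ * ‖d l‖) ^ 2 ≤
          (∑ l ∈ t, ‖(inner ℝ (e l) x : ℝ)‖ ^ 2) * (∑ l ∈ t, ‖d l‖ ^ 2) :=
        Finset.sum_mul_sq_le_sq_mul_sq t _ _
      have ha : (∑ l ∈ t, ‖(inner ℝ (e l) x : ℝ)‖ ^ 2) ≤ ‖x‖ ^ 2 := by
        rw [← hc2sum x]
        exact Summable.sum_le_tsum t (fun l _ => sq_nonneg _) (hc2 x)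
      have hb : (∑ l ∈ t, ‖d l‖ ^ 2) ≤ s :=
        Summable.sum_le_tsum t (fun l _ => sq_nonneg _) hsum
      have hnn : 0 ≤ ∑ l ∈ t, ‖(inner ℝ (e l) x : ℝ)‖ * ‖d l‖ :=
        Finset.sum_nonneg (fun l _ => mul_nonneg (norm_nonneg _) (norm_nonneg _))
      have key : (∑ l ∈ t, ‖(inner ℝ (e l) x : ℝ)‖ * ‖d l‖) ^ 2 ≤ ‖x‖ ^ 2 * s := by
        calc (∑ l ∈ t, ‖(inner ℝ (e l) x : ℝ)‖ * ‖d l‖) ^ 2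
            ≤ (∑ l ∈ t, ‖(inner ℝ (e l) x : ℝ)‖ ^ 2) * (∑ l ∈ t, ‖d l‖ ^ 2) := hcs
          _ ≤ ‖x‖ ^ 2 * s := by
              apply mul_le_mul ha hb (Finset.sum_nonneg (fun l _ => sq_nonneg _))
                (sq_nonneg _)
      calc (∑ l ∈ t, ‖(inner ℝ (e l) x : ℝ) • d l‖)
          = ∑ l ∈ t, ‖(inner ℝ (e l) x : ℝ)‖ * ‖d l‖ := by
            refine Finset.sum_congr rfl (fun l _ => ?_); rw [norm_smul]
        _ ≤ Real.sqrt (‖x‖ ^ 2 * s) := (Real.le_sqrt hnn (mul_nonneg (sq_nonneg _) hs0)).mpr key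
    have h3 : Real.sqrt (‖x‖ ^ 2 * s) = Real.sqrt s * ‖x‖ := by
      rw [Real.sqrt_mul (sq_nonneg _), Real.sqrt_sq (norm_nonneg _), mul_comm]
    linarith [h1, h2, h3 ▸ h2]
  let D : H →L[ℝ] H := Dlin.mkContinuous (Real.sqrt s) hbound
  have hDnorm : ‖D‖ < 1 := by
    have h1 : ‖D‖ ≤ Real.sqrt s :=
      Dlin.mkContinuous_norm_le (Real.sqrt_nonneg s) hbound
    have h2 : Real.sqrt s < 1 := by
      rw [show (1 : ℝ) = Real.sqrt 1 by simp]
      exact Real.sqrt_lt_sqrt hs0 hlt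
    linarith
  -- D applied to basis vectors
  have hDe : ∀ l, D (e l) = d l := by
    intro l
    have : D (e l) = ∑' k, (inner ℝ (e k) (e l) : ℝ) • d k := rfl
    rw [this]
    rw [tsum_eq_single l]
    · have : (inner ℝ (e l) (e l) : ℝ) = 1 := by
        have := e.orthonormal
        rw [orthonormal_iff_ite] at this
        simpa using this l l
      rw [this, one_smul]
    · intro k hk
      have := e.orthonormal
      rw [orthonormal_iff_ite] at this
      have h := this k l
      rw [if_neg hk] at h
      rw [h, zero_smul]
  -- build the equivalence
  let u : (H →L[ℝ] H)ˣ := Units.oneSub D hDnorm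
  refine ⟨ContinuousLinearEquiv.unitsEquiv ℝ H u, fun l => ?_⟩
  have : (ContinuousLinearEquiv.unitsEquiv ℝ H u) (e l) = (u : H →L[ℝ] H) (e l) := rfl
  rw [this]
  have hu : (u : H →L[ℝ] H) = 1 - D := rfl
  rw [hu, ContinuousLinearMap.sub_apply, ContinuousLinearMap.one_apply, hDe l]
  simp [hd]
end
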